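/- For every ν with 0 < ν ≤ 1, the rescaled GGD-MAP threshold t̄_ν := 2^{−1/(2−ν)} (2−ν) (2−2ν)^{−(1−ν)/(2−ν)} satisfies 0 < t̄_ν < 1. -/

import Mathlib

/-!
Put `w₁ = 1/(2-ν)` and `w₂ = (1-ν)/(2-ν)`, so `w₁ + w₂ = 1`. Then
`t̄_ν = (2-ν) · (1/2)^{w₁} (1/(2-2ν))^{w₂}`, and the weighted AM-GM inequality bounds the geometric
mean by `w₁/2 + w₂/(2-2ν) = 1/(2-ν)`, strictly because `1/2 ≠ 1/(2-2ν)` for `ν ≠ 0`.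
At `ν = 1` the second factor is `0⁰ = 1` and `t̄_1 = 1/2`.
-/

/-- The rescaled GGD-MAP threshold
`t̄_ν = 2^{−1/(2−ν)} (2−ν) (2−2ν)^{−(1−ν)/(2−ν)}` (real powers, with `0⁰ = 1`). -/
noncomputable def tbar (ν : ℝ) : ℝ :=
  (2 : ℝ) ^ (-(1 / (2 - ν))) * (2 - ν) * (2 - 2 * ν) ^ (-((1 - ν) / (2 - ν)))

open Real

lemma tbar_one : tbar 1 = 1 / 2 := by
  norm_num [tbar]

lemma tbar_pos {ν : ℝ} (hν : ν < 1) : 0 < tbar ν := by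
  unfold tbar
  exact mul_pos (mul_pos (rpow_pos_of_pos two_pos _) (by linarith))
    (rpow_pos_of_pos (by linarith) _)

lemma tbar_eq_mul_geom_mean {ν : ℝ} (hν : ν < 1) :
    tbar ν = (2 - ν) * ((2 : ℝ)⁻¹ ^ (1 / (2 - ν)) * (2 - 2 * ν)⁻¹ ^ ((1 - ν) / (2 - ν))) := by
  rw [tbar, rpow_neg (by norm_num), rpow_neg (by linarith),
    inv_rpow (by norm_num), inv_rpow (by linarith)]
  ring

lemma tbar_lt_one {ν : ℝ} (hν₀ : ν ≠ 0) (hν : ν < 1) : tbar ν < 1 := by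
  have h2ν : 0 < 2 - ν := by linarith
  have h22ν : 0 < 2 - 2 * ν := by linarith
  have amgm : (2 : ℝ)⁻¹ ^ (1 / (2 - ν)) * (2 - 2 * ν)⁻¹ ^ ((1 - ν) / (2 - ν))
      < 1 / (2 - ν) * 2⁻¹ + (1 - ν) / (2 - ν) * (2 - 2 * ν)⁻¹ := by
    refine (geom_mean_lt_arith_mean2_weighted_iff_of_pos (by positivity)
      (div_pos (by linarith) h2ν) (by norm_num) (by positivity) (by field_simp; ring)).2 ?_
    rw [Ne, inv_inj]
    intro h
    exact hν₀ (by linarith)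
  have arith_mean : 1 / (2 - ν) * 2⁻¹ + (1 - ν) / (2 - ν) * (2 - 2 * ν)⁻¹ = 1 / (2 - ν) := by
    have : (1 : ℝ) - ν ≠ 0 := by linarith
    rw [show (2 : ℝ) - 2 * ν = 2 * (1 - ν) by ring]
    field_simp
    ring
  rw [tbar_eq_mul_geom_mean hν]
  calc (2 - ν) * ((2 : ℝ)⁻¹ ^ (1 / (2 - ν)) * (2 - 2 * ν)⁻¹ ^ ((1 - ν) / (2 - ν)))
      < (2 - ν) * (1 / (2 - ν)) := mul_lt_mul_of_pos_left (amgm.trans_eq arith_mean) h2ν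
    _ = 1 := by field_simp

/-- For `0 < ν ≤ 1` the rescaled GGD-MAP threshold satisfies `0 < t̄_ν < 1`. -/
theorem tbar_bounds (ν : ℝ) (h1 : 0 < ν) (h2 : ν ≤ 1) :
    0 < tbar ν ∧ tbar ν < 1 := by
  rcases h2.lt_or_eq with hν | rfl
  · exact ⟨tbar_pos hν, tbar_lt_one h1.ne' hν⟩
  · rw [tbar_one]
    norm_num
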